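/- arXiv:1710.07889 — 2 statements merged into one kernel-verified Lean document; each statement's English description precedes it below -/
import Mathlib

section
/- Let l be a nonnegative integer, r a negative integer, and let a, b, c be real numbers with c < r − l (or c a nonpositive integer with c ≤ r − l), such that a − l and b + 1 are not nonpositive integers. Then ₃F₂(a, b−r, c; a−l, b+1; 1) = 0. -/
open Finset

/-- Pochhammer symbol `(a)ₙ = a(a+1)⋯(a+n-1)` for natural `n`. -/
noncomputable def poch (a : ℝ) (n : ℕ) : ℝ := Polynomial.eval a (ascPochhammer ℝ n)

/-- Pochhammer symbol `(a)ₖ` for integer `k`: for `k ≥ 0` the ascending product,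
and `(a)₋ₖ = (-1)ᵏ/(1-a)ₖ` for `k ≥ 0`. -/
noncomputable def pochZ (a : ℝ) (k : ℤ) : ℝ :=
  if 0 ≤ k then poch a k.toNat else (-1) ^ (-k).toNat / poch (1 - a) (-k).toNat

/-- The (generally non-terminating) Clausen series `₃F₂(a,b,c;d,e;1)`. -/
noncomputable def F32 (a b c d e : ℝ) : ℝ :=
  ∑' n : ℕ, poch a n * poch b n * poch c n / (poch d n * poch e n * n.factorial)

/-- A terminating `₃F₂(a,b,c;d,e;1)` summed over `k = 0, …, N`. -/
noncomputable def F32sum (N : ℕ) (a b c d e : ℝ) : ℝ :=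
  ∑ k ∈ Finset.range (N + 1),
    poch a k * poch b k * poch c k / (poch d k * poch e k * k.factorial)

/-- The Kummer confluent hypergeometric function `₁F₁(a;b;x)`. -/
noncomputable def F11 (a b x : ℝ) : ℝ :=
  ∑' n : ℕ, poch a n * x ^ n / (poch b n * n.factorial)

/-!
Write `x = a - l`, `y = b + 1` and `r = -(j + 1)`. Since `(x + l)ₙ / (x)ₙ = (x + n)ₗ / (x)ₗ` and
`(y + j)ₙ / (y)ₙ = (y + n)ⱼ / (y)ⱼ`, the `n`-th term of the series is `(c)ₙ P(n) / n!` for a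
polynomial `P` of degree `l + j`. Expanding `P` in falling factorials, it suffices that
`∑ₙ (c)ₙ n(n-1)⋯(n-k+1) / n! = (c)ₖ ∑ᵢ (c + k)ᵢ / i!` vanishes for `k ≤ l + j`. This is the
binomial series of `(1 - 1)^{-(c + k)}` with `c + k < 0`: its partial sums are
`(c + k + 1)ᵢ / i! ~ i^{c+k} / Γ(c + k + 1) → 0`, and its terms eventually have constant sign,
so it converges unconditionally.
-/

open Filter Topology Polynomial

lemma poch_zero (a : ℝ) : poch a 0 = 1 := by simp [poch]

lemma poch_succ (a : ℝ) (n : ℕ) : poch a (n + 1) = poch a n * (a + n) := by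
  simp [poch, ascPochhammer_succ_right]

lemma poch_succ_left (a : ℝ) (n : ℕ) : poch a (n + 1) = a * poch (a + 1) n := by
  simp [poch, ascPochhammer_succ_left, eval_comp]

lemma poch_add (a : ℝ) (n m : ℕ) : poch a (n + m) = poch a n * poch (a + n) m := by
  simpa [poch, eval_comp] using (congrArg (eval a) (ascPochhammer_mul ℝ n m)).symm

lemma poch_mul_poch_add_comm (a : ℝ) (k n : ℕ) :
    poch a k * poch (a + k) n = poch a n * poch (a + n) k := by
  rw [← poch_add, ← poch_add, add_comm]

lemma poch_eq_prod (a : ℝ) (n : ℕ) : poch a n = ∏ i ∈ range n, (a + i) := by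
  induction n with
  | zero => simp [poch_zero]
  | succ n ih => rw [poch_succ, ih, prod_range_succ]

lemma poch_ne_zero {a : ℝ} (h : ∀ k : ℕ, a ≠ -(k : ℝ)) (n : ℕ) : poch a n ≠ 0 := by
  simp only [poch, ne_eq, ascPochhammer_eval_eq_zero_iff, not_exists, not_and]
  exact fun k _ hk => h k (by linarith)

lemma sum_range_poch_div_factorial (d : ℝ) (J : ℕ) :
    ∑ j ∈ range (J + 1), poch d j / j.factorial = poch (d + 1) J / J.factorial := by
  induction J with
  | zero => simp [poch_zero]
  | succ J ih =>
    rw [sum_range_succ, ih, poch_succ_left, poch_succ, Nat.factorial_succ]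
    push_cast
    field_simp
    ring

/-- Euler's limit `Γ(e) = lim n^e n! / (e)ₙ₊₁` makes `(e)ₙ₊₁ / (n+1)! ≈ n^(e-1) / Γ(e)`. -/
lemma tendsto_poch_div_factorial {e : ℝ} (he : e < 1) :
    Tendsto (fun n : ℕ => poch e n / n.factorial) atTop (𝓝 0) := by
  by_cases hint : ∃ N : ℕ, e = -(N : ℝ)
  · obtain ⟨N, rfl⟩ := hint
    refine tendsto_const_nhds.congr' ?_
    filter_upwards [eventually_gt_atTop N] with n hn
    rw [poch_eq_prod, prod_eq_zero (mem_range.mpr hn) (by ring), zero_div]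
  push Not at hint
  have hpow : Tendsto (fun n : ℕ => (n : ℝ) ^ e / (n + 1)) atTop (𝓝 0) := by
    refine squeeze_zero' (Eventually.of_forall fun n => by positivity) ?_
      ((tendsto_rpow_neg_atTop (by linarith : 0 < 1 - e)).comp tendsto_natCast_atTop_atTop)
    filter_upwards [eventually_gt_atTop 0] with n hn
    have hn' : (0 : ℝ) < n := by exact_mod_cast hn
    rw [Function.comp_apply, neg_sub, Real.rpow_sub hn', Real.rpow_one]
    exact div_le_div_of_nonneg_left (by positivity) hn' (by linarith)
  have hlim := hpow.div (Real.GammaSeq_tendsto_Gamma e) (Real.Gamma_ne_zero hint)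
  rw [zero_div] at hlim
  refine (tendsto_add_atTop_iff_nat 1).mp (hlim.congr' ?_)
  filter_upwards [eventually_gt_atTop 0] with n hn
  have hn' : (0 : ℝ) < n := by exact_mod_cast hn
  have hp : poch e (n + 1) ≠ 0 := poch_ne_zero hint _
  rw [Pi.div_apply, Real.GammaSeq, ← poch_eq_prod, Nat.factorial_succ]
  push_cast
  field_simp

lemma hasSum_of_tendsto_of_eventually_nonneg {f : ℕ → ℝ} {s : ℝ}
    (hf : ∀ᶠ n in atTop, 0 ≤ f n) (h : Tendsto (fun n => ∑ i ∈ range n, f i) atTop (𝓝 s)) :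
    HasSum f s := by
  obtain ⟨N, hN⟩ := eventually_atTop.mp hf
  rw [← hasSum_nat_add_iff' N, hasSum_iff_tendsto_nat_of_nonneg fun i => hN _ (by omega)]
  refine (((tendsto_add_atTop_iff_nat N).mpr h).sub_const (∑ i ∈ range N, f i)).congr fun I => ?_
  rw [add_comm I N, sum_range_add]
  simp [add_comm]

lemma hasSum_of_tendsto_of_eventually_nonneg_or_nonpos {f : ℕ → ℝ} {s : ℝ}
    (hf : (∀ᶠ n in atTop, 0 ≤ f n) ∨ ∀ᶠ n in atTop, f n ≤ 0)
    (h : Tendsto (fun n => ∑ i ∈ range n, f i) atTop (𝓝 s)) : HasSum f s := by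
  rcases hf with hf | hf
  · exact hasSum_of_tendsto_of_eventually_nonneg hf h
  · have hneg : HasSum (-f) (-s) := hasSum_of_tendsto_of_eventually_nonneg
      (hf.mono fun n hn => by simpa using hn) (by simpa using h.neg)
    simpa using hneg.neg

lemma hasSum_poch_div_factorial {d : ℝ} (hd : d < 0) :
    HasSum (fun j : ℕ => poch d j / j.factorial) 0 := by
  have hpartial : Tendsto (fun J : ℕ => ∑ j ∈ range J, poch d j / j.factorial) atTop (𝓝 0) :=
    (tendsto_add_atTop_iff_nat 1).mp <| (tendsto_poch_div_factorial (by linarith)).congr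
      fun J => (sum_range_poch_div_factorial d J).symm
  obtain ⟨j₀, hj₀⟩ := exists_nat_gt (-d)
  have hsign : ∀ j ≥ j₀, poch d j / j.factorial
      = poch d j₀ * (poch (d + j₀) (j - j₀) / j.factorial) := fun j hj => by
    rw [← mul_div_assoc, ← poch_add, Nat.add_sub_cancel' hj]
  have htail : ∀ j, 0 ≤ poch (d + j₀) (j - j₀) / j.factorial := fun j =>
    div_nonneg (ascPochhammer_pos _ _ (by linarith)).le (Nat.cast_nonneg _)
  refine hasSum_of_tendsto_of_eventually_nonneg_or_nonpos ?_ hpartial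
  rcases le_total 0 (poch d j₀) with hp | hp
  · exact Or.inl <| eventually_atTop.mpr ⟨j₀, fun j hj => hsign j hj ▸ mul_nonneg hp (htail j)⟩
  · exact Or.inr <| eventually_atTop.mpr
      ⟨j₀, fun j hj => hsign j hj ▸ mul_nonpos_of_nonpos_of_nonneg hp (htail j)⟩

lemma hasSum_poch_mul_descFactorial {c : ℝ} {k : ℕ} (h : c + k < 0) :
    HasSum (fun n : ℕ => poch c n * n.descFactorial k / n.factorial) 0 := by
  set f : ℕ → ℝ := fun n => poch c n * n.descFactorial k / n.factorial
  have hshift : ∀ j : ℕ, f (j + k) = poch c k * (poch (c + k) j / j.factorial) := fun j => by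
    have hfac : ((j + k).factorial : ℝ) = j.factorial * (j + k).descFactorial k := by
      have := (Nat.factorial_mul_descFactorial (Nat.le_add_left k j)).symm
      rw [Nat.add_sub_cancel] at this
      exact_mod_cast this
    have hdesc : ((j + k).descFactorial k : ℝ) ≠ 0 := by
      rw [Nat.cast_ne_zero, ne_eq, Nat.descFactorial_eq_zero_iff_lt]; omega
    simp only [f]
    rw [hfac, add_comm j k, poch_add]
    field_simp
  have hinit : ∑ i ∈ range k, f i = 0 := sum_eq_zero fun i hi => by
    simp [f, Nat.descFactorial_eq_zero_iff_lt.mpr (mem_range.mp hi)]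
  have htail := ((hasSum_poch_div_factorial h).mul_left (poch c k)).congr_fun hshift
  rw [mul_zero] at htail
  simpa [hinit] using (hasSum_nat_add_iff' k).mp (by simpa [hinit] using htail)

lemma natDegree_sub_C_coeff_mul_le {R : Type*} [Ring R] {p q : R[X]} {D : ℕ}
    (hp : p.natDegree ≤ D + 1) (hq : q.Monic) (hqD : q.natDegree = D + 1) :
    (p - C (p.coeff (D + 1)) * q).natDegree ≤ D := by
  rw [natDegree_le_iff_coeff_eq_zero]
  intro N hN
  rw [coeff_sub, coeff_C_mul]
  obtain rfl | hlt := (show D + 1 ≤ N from hN).eq_or_lt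
  · rw [← hqD, hq.coeff_natDegree, mul_one, sub_self]
  · rw [coeff_eq_zero_of_natDegree_lt (hp.trans_lt hlt),
      coeff_eq_zero_of_natDegree_lt (p := q) (by omega), mul_zero, sub_zero]

/-- Expand `P` in the falling factorials `descPochhammer ℝ k`, `k ≤ D`. -/
lemma hasSum_poch_mul_eval_div_factorial {c : ℝ} {D : ℕ} (P : ℝ[X]) (hP : P.natDegree ≤ D)
    (h : c + D < 0) : HasSum (fun n : ℕ => poch c n * P.eval (n : ℝ) / n.factorial) 0 := by
  induction D generalizing P with
  | zero =>
    obtain ⟨p₀, rfl⟩ : ∃ p₀, P = C p₀ := ⟨_, eq_C_of_natDegree_le_zero hP⟩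
    have hc := (hasSum_poch_mul_descFactorial (k := 0) h).mul_left p₀
    rw [mul_zero] at hc
    refine hc.congr_fun fun n => ?_
    rw [eval_C, Nat.descFactorial_zero, Nat.cast_one]
    ring
  | succ D ih =>
    have hlower := ih (P - C (P.coeff (D + 1)) * descPochhammer ℝ (D + 1))
      (natDegree_sub_C_coeff_mul_le hP (monic_descPochhammer ℝ _) (descPochhammer_natDegree ℝ _))
      (by push_cast at h; linarith)
    have htop := (hasSum_poch_mul_descFactorial h).mul_left (P.coeff (D + 1))
    have hsum := hlower.add htop
    rw [mul_zero, add_zero] at hsum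
    refine hsum.congr_fun fun n => ?_
    simp only [eval_sub, eval_mul, eval_C, descPochhammer_eval_eq_descFactorial]
    ring

/-- The polynomial `n ↦ (x + k)ₙ / (x)ₙ = (x + n)ₖ / (x)ₖ`. -/
noncomputable def pochRatio (x : ℝ) (k : ℕ) : ℝ[X] :=
  C (poch x k)⁻¹ * (ascPochhammer ℝ k).comp (X + C x)

lemma natDegree_pochRatio_le (x : ℝ) (k : ℕ) : (pochRatio x k).natDegree ≤ k :=
  natDegree_C_mul_le _ _ |>.trans <| by
    rw [natDegree_comp, ascPochhammer_natDegree, natDegree_X_add_C, mul_one]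

lemma eval_pochRatio {x : ℝ} (hx : ∀ i : ℕ, x ≠ -(i : ℝ)) (k n : ℕ) :
    (pochRatio x k).eval (n : ℝ) = poch (x + k) n / poch x n := by
  have hxk := poch_ne_zero hx k
  have hxn := poch_ne_zero hx n
  have hcomm := poch_mul_poch_add_comm x k n
  simp only [pochRatio, eval_mul, eval_C, eval_comp, eval_add, eval_X]
  change (poch x k)⁻¹ * poch (n + x) k = _
  rw [add_comm]
  field_simp
  linear_combination hcomm.symm

theorem F32_vanishes_neg_r (l : ℕ) (r : ℤ) (hr : r < 0) (a b c : ℝ)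
    (hc : c < (r : ℝ) - l ∨ ((∃ k : ℕ, c = -(k : ℝ)) ∧ c ≤ (r : ℝ) - l))
    (hal : ∀ k : ℕ, a - l ≠ -(k : ℝ))
    (hb1 : ∀ k : ℕ, b + 1 ≠ -(k : ℝ)) :
    F32 a (b - r) c (a - l) (b + 1) = 0 := by
  obtain ⟨j, rfl⟩ : ∃ j : ℕ, r = -(j + 1 : ℕ) := ⟨(-r - 1).toNat, by omega⟩
  have hcj : c + (l + j : ℕ) < 0 := by
    have hcr : c ≤ ((-(j + 1 : ℕ) : ℤ) : ℝ) - l := hc.elim le_of_lt And.right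
    push_cast at hcr ⊢
    linarith
  have hsum := hasSum_poch_mul_eval_div_factorial (pochRatio (a - l) l * pochRatio (b + 1) j)
    (natDegree_mul_le.trans (add_le_add (natDegree_pochRatio_le _ _) (natDegree_pochRatio_le _ _)))
    hcj
  refine (hsum.congr_fun fun n => ?_).tsum_eq
  have hb : b - ((-(j + 1 : ℕ) : ℤ) : ℝ) = b + 1 + j := by push_cast; ring
  rw [eval_mul, eval_pochRatio hal, eval_pochRatio hb1, sub_add_cancel, hb]
  field_simp [poch_ne_zero hal n, poch_ne_zero hb1 n]
end

section
/- Let μ, β, x be complex numbers such that neither μ nor μ + β is a nonpositive integer (equivalently, μ, μ+1, μ+β, μ+1+β are not nonpositive integers). Then (μ+β) · ₁F₁(1; μ+1; x) · ₁F₁(1; μ+β; x) − μ · ₁F₁(1; μ; x) · ₁F₁(1; μ+1+β; x) = (μ+β) · ₁F₁(1; μ+1; x) − μ · ₁F₁(1; μ+1+β; x). -/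
open Finset

/-- Pochhammer symbol `(a)ₙ = a(a+1)⋯(a+n-1)` for complex `a` and natural `n`. -/
noncomputable def pochC (a : ℂ) (n : ℕ) : ℂ := Polynomial.eval a (ascPochhammer ℂ n)

/-- The Kummer confluent hypergeometric function `₁F₁(a;b;x)` of a complex variable. -/
noncomputable def F11C (a b x : ℂ) : ℂ :=
  ∑' n : ℕ, pochC a n * x ^ n / (pochC b n * n.factorial)

lemma pochC_one_eq (n : ℕ) : pochC 1 n = (n.factorial : ℂ) := by
  simp [pochC]

lemma pochC_ne_zero {b : ℂ} (hb : ∀ k : ℕ, b ≠ -(k : ℂ)) (n : ℕ) : pochC b n ≠ 0 := by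
  rw [pochC, Ne, ascPochhammer_eval_eq_zero_iff]
  rintro ⟨k, -, hk⟩
  exact hb k (by linear_combination hk)

lemma pochC_succ_right (b : ℂ) (n : ℕ) : pochC b (n + 1) = pochC b n * (b + n) := by
  simp [pochC, ascPochhammer_succ_eval]

lemma pochC_succ_left (b : ℂ) (n : ℕ) : pochC b (n + 1) = b * pochC (b + 1) n := by
  simp [pochC, ascPochhammer_succ_left, Polynomial.eval_comp]

lemma F11C_one_eq (b x : ℂ) : F11C 1 b x = ∑' n : ℕ, x ^ n / pochC b n := by
  unfold F11C
  congr 1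
  funext n
  rw [pochC_one_eq]
  have h : (n.factorial : ℂ) ≠ 0 := Nat.cast_ne_zero.mpr n.factorial_ne_zero
  rw [mul_comm (pochC b n), ← div_div, mul_comm, mul_div_assoc, div_self h, mul_one]

lemma summable_F (b x : ℂ) (hb : ∀ k : ℕ, b ≠ -(k : ℂ)) :
    Summable (fun n : ℕ => x ^ n / pochC b n) := by
  have htend : Filter.Tendsto (fun n : ℕ => ‖b + (n : ℂ)‖) Filter.atTop Filter.atTop := by
    apply Filter.tendsto_atTop_mono (f := fun n : ℕ => (n : ℝ) - ‖b‖)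
    · intro n
      have h1 : ‖(n : ℂ)‖ ≤ ‖b + (n : ℂ)‖ + ‖b‖ := by
        calc ‖(n : ℂ)‖ = ‖b + (n : ℂ) + (-b)‖ := by ring_nf
          _ ≤ ‖b + (n : ℂ)‖ + ‖(-b)‖ := norm_add_le _ _
          _ = ‖b + (n : ℂ)‖ + ‖b‖ := by rw [norm_neg]
      have h2 : ‖(n : ℂ)‖ = (n : ℝ) := by simp
      linarith
    · exact Filter.tendsto_atTop_add_const_right _ _ tendsto_natCast_atTop_atTop
  have hev : ∀ᶠ n : ℕ in Filter.atTop, 2 * ‖x‖ + 1 ≤ ‖b + (n : ℂ)‖ :=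
    htend.eventually_ge_atTop _
  apply summable_of_ratio_norm_eventually_le (r := 1/2) (by norm_num)
  filter_upwards [hev] with n hn
  have hbn : pochC b n ≠ 0 := pochC_ne_zero hb n
  have hp : (0:ℝ) < ‖pochC b n‖ := norm_pos_iff.mpr hbn
  have hbn' : (0:ℝ) < ‖b + (n : ℂ)‖ := by
    have : (0:ℝ) ≤ ‖x‖ := norm_nonneg x
    linarith
  have heq : ‖x ^ (n+1) / pochC b (n+1)‖
      = ‖x‖ / ‖b + (n : ℂ)‖ * ‖x ^ n / pochC b n‖ := by
    rw [pochC_succ_right, pow_succ, norm_div, norm_div, norm_mul, norm_mul]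
    field_simp
  rw [heq]
  have key : ‖x‖ / ‖b + (n : ℂ)‖ ≤ 1/2 := by
    rw [div_le_iff₀ hbn']
    nlinarith [norm_nonneg x]
  exact mul_le_mul_of_nonneg_right key (norm_nonneg _)

lemma F11C_shift (b x : ℂ) (hb : ∀ k : ℕ, b ≠ -(k : ℂ)) :
    b * F11C 1 b x = b + x * F11C 1 (b + 1) x := by
  have hb0 : b ≠ 0 := by
    have := hb 0
    simpa using this
  rw [F11C_one_eq, F11C_one_eq]
  rw [Summable.tsum_eq_zero_add (summable_F b x hb)]
  have h1 : ∀ n : ℕ, x ^ (n + 1) / pochC b (n + 1) = x / b * (x ^ n / pochC (b + 1) n) := by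
    intro n
    rw [pochC_succ_left, pow_succ]
    field_simp
  simp only [h1, pow_zero]
  rw [tsum_mul_left, pochC, ascPochhammer_zero, Polynomial.eval_one]
  field_simp

theorem Kummer_linearization (μ β x : ℂ)
    (hμ : ∀ k : ℕ, μ ≠ -(k : ℂ)) (hμβ : ∀ k : ℕ, μ + β ≠ -(k : ℂ)) :
    (μ + β) * F11C 1 (μ + 1) x * F11C 1 (μ + β) x -
      μ * F11C 1 μ x * F11C 1 (μ + 1 + β) x =
    (μ + β) * F11C 1 (μ + 1) x - μ * F11C 1 (μ + 1 + β) x := by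
  have h1 : μ * F11C 1 μ x = μ + x * F11C 1 (μ + 1) x := F11C_shift μ x hμ
  have h2 : (μ + β) * F11C 1 (μ + β) x = (μ + β) + x * F11C 1 (μ + β + 1) x :=
    F11C_shift (μ + β) x hμβ
  have heq : μ + β + 1 = μ + 1 + β := by ring
  rw [heq] at h2
  linear_combination F11C 1 (μ + 1) x * h2 - F11C 1 (μ + 1 + β) x * h1
end
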